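/- Let W_i, W_c be real m × p matrices, U_i, U_c real m × n matrices, b_i, b_c ∈ ℝᵐ, and let x, x̂ ∈ ℝᵖ, h, ĥ ∈ ℝⁿ. Define i(x,h) = σ∘(W_i·x + U_i·h + b_i) and ci(x,h) = tanh∘(W_c·x + U_c·h + b_c). Then ‖i(x̂,ĥ) ⊙ ci(x̂,ĥ) − i(x,h) ⊙ ci(x,h)‖ ≤ (17/16) · ((‖W_i‖ + ‖W_c‖)·‖x̂ − x‖ + (‖U_i‖ + ‖U_c‖)·‖ĥ − h‖). -/

import Mathlib

/-!
Componentwise,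
`σ(a')·tanh(c') − σ(a)·tanh(c) = (σ(a') − σ(a))·tanh(c) + σ(a')·(tanh(c') − tanh(c))`.
Since `|σ|, |tanh| ≤ 1`, `σ` is `1/4`-Lipschitz (`σ' = σ(1 − σ)`) and `tanh` is `1`-Lipschitz, the
Hadamard product moves by at most `‖Δa‖/4 + ‖Δc‖` in the Euclidean norm. The preactivations are
affine in `(x, h)`, so `‖Δa‖` and `‖Δc‖` are bounded through the operator norms, and
`1/4, 1 ≤ 17/16`.
-/

/-- The logistic sigmoid `σ(x) = 1 / (1 + e^{-x})`. -/
noncomputable def sigmoid (x : ℝ) : ℝ := 1 / (1 + Real.exp (-x))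

/-- Componentwise application of `f : ℝ → ℝ` to a vector of `ℝⁿ`. -/
noncomputable def cwise {n : ℕ} (f : ℝ → ℝ) (v : EuclideanSpace ℝ (Fin n)) :
    EuclideanSpace ℝ (Fin n) := WithLp.toLp 2 (fun i => f (v i))

/-- Hadamard (componentwise) product of vectors of `ℝⁿ`. -/
def hadam {n : ℕ} (v w : EuclideanSpace ℝ (Fin n)) : EuclideanSpace ℝ (Fin n) :=
  WithLp.toLp 2 (fun i => v i * w i)

/-- The operator norm of a real matrix with respect to Euclidean norms. -/
noncomputable def matOpNorm {m n : ℕ} (W : Matrix (Fin m) (Fin n) ℝ) : ℝ :=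
  ‖LinearMap.toContinuousLinearMap (Matrix.toEuclideanLin W)‖

open NNReal

theorem sigmoid_eq_real_sigmoid : sigmoid = Real.sigmoid :=
  funext fun _ => one_div _

theorem Real.abs_sigmoid_le_one (x : ℝ) : |Real.sigmoid x| ≤ 1 :=
  abs_le.mpr ⟨by linarith [Real.sigmoid_nonneg x], Real.sigmoid_le_one x⟩

theorem Real.lipschitzWith_sigmoid : LipschitzWith 4⁻¹ Real.sigmoid := by
  refine lipschitzWith_of_nnnorm_deriv_le differentiable_sigmoid fun x => ?_
  rw [← NNReal.coe_le_coe, coe_nnnorm, Real.deriv_sigmoid, Real.norm_eq_abs,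
    abs_of_nonneg (mul_nonneg (sigmoid_nonneg x) (by linarith [sigmoid_le_one x]))]
  push_cast
  nlinarith [sq_nonneg (Real.sigmoid x - 1 / 2)]

theorem Real.hasDerivAt_tanh (x : ℝ) : HasDerivAt tanh (1 / cosh x ^ 2) x := by
  have hquot := (hasDerivAt_sinh x).div (hasDerivAt_cosh x) (cosh_pos x).ne'
  rw [show tanh = sinh / cosh from funext tanh_eq_sinh_div_cosh]
  refine hquot.congr_deriv ?_
  rw [← cosh_sq_sub_sinh_sq x]
  ring

theorem Real.lipschitzWith_tanh : LipschitzWith 1 tanh := by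
  refine lipschitzWith_of_nnnorm_deriv_le (fun x => (hasDerivAt_tanh x).differentiableAt)
    fun x => ?_
  rw [← NNReal.coe_le_coe, coe_nnnorm, (hasDerivAt_tanh x).deriv, Real.norm_eq_abs,
    abs_of_nonneg (by positivity), NNReal.coe_one, div_le_one (by positivity)]
  nlinarith [one_le_cosh x]

theorem abs_mul_sub_mul_le_of_lipschitzWith {f g : ℝ → ℝ} {Mf Mg : ℝ} {Kf Kg : ℝ≥0}
    (hf : ∀ t, |f t| ≤ Mf) (hg : ∀ t, |g t| ≤ Mg)
    (hfK : LipschitzWith Kf f) (hgK : LipschitzWith Kg g) (a a' c c' : ℝ) :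
    |f a' * g c' - f a * g c| ≤ Kf * Mg * |a' - a| + Mf * Kg * |c' - c| := by
  have hfa : |f a' - f a| ≤ Kf * |a' - a| := by
    simpa only [Real.dist_eq] using hfK.dist_le_mul a' a
  have hgc : |g c' - g c| ≤ Kg * |c' - c| := by
    simpa only [Real.dist_eq] using hgK.dist_le_mul c' c
  calc |f a' * g c' - f a * g c|
      = |(f a' - f a) * g c + f a' * (g c' - g c)| := by ring_nf
    _ ≤ |f a' - f a| * |g c| + |f a'| * |g c' - g c| := by
      rw [← abs_mul, ← abs_mul]; exact abs_add_le _ _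
    _ ≤ Kf * |a' - a| * Mg + Mf * (Kg * |c' - c|) := by
      have hfa'_le := hf a'
      have hgc_le := hg c
      have hMf : 0 ≤ Mf := (abs_nonneg _).trans (hf a)
      gcongr
    _ = Kf * Mg * |a' - a| + Mf * Kg * |c' - c| := by ring

namespace EuclideanSpace

variable {m : ℕ}

theorem norm_le_norm_of_abs_le {u v : EuclideanSpace ℝ (Fin m)} (h : ∀ i, |u i| ≤ |v i|) :
    ‖u‖ ≤ ‖v‖ := by
  simp only [norm_eq, Real.norm_eq_abs, sq_abs]
  exact Real.sqrt_le_sqrt (Finset.sum_le_sum fun i _ => sq_le_sq.mpr (h i))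

theorem norm_cwise_abs (u : EuclideanSpace ℝ (Fin m)) : ‖cwise abs u‖ = ‖u‖ := by
  have h : ∀ i, |cwise abs u i| = |u i| := fun i => abs_abs (u i)
  exact (norm_le_norm_of_abs_le fun i => (h i).le).antisymm
    (norm_le_norm_of_abs_le fun i => (h i).ge)

theorem norm_le_of_abs_le_add {d u v : EuclideanSpace ℝ (Fin m)} {α β : ℝ} (hα : 0 ≤ α)
    (hβ : 0 ≤ β) (h : ∀ i, |d i| ≤ α * |u i| + β * |v i|) :
    ‖d‖ ≤ α * ‖u‖ + β * ‖v‖ := by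
  calc ‖d‖ ≤ ‖α • cwise abs u + β • cwise abs v‖ :=
        norm_le_norm_of_abs_le fun i => (h i).trans (le_abs_self _)
    _ ≤ ‖α • cwise abs u‖ + ‖β • cwise abs v‖ := norm_add_le _ _
    _ = α * ‖u‖ + β * ‖v‖ := by
      rw [norm_smul, norm_smul, norm_cwise_abs, norm_cwise_abs, Real.norm_of_nonneg hα,
        Real.norm_of_nonneg hβ]

end EuclideanSpace

theorem norm_hadam_cwise_sub_le {m : ℕ} {f g : ℝ → ℝ} {Mf Mg : ℝ} {Kf Kg : ℝ≥0}
    (hf : ∀ t, |f t| ≤ Mf) (hg : ∀ t, |g t| ≤ Mg)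
    (hfK : LipschitzWith Kf f) (hgK : LipschitzWith Kg g) (a a' c c' : EuclideanSpace ℝ (Fin m)) :
    ‖hadam (cwise f a') (cwise g c') - hadam (cwise f a) (cwise g c)‖ ≤
      Kf * Mg * ‖a' - a‖ + Mf * Kg * ‖c' - c‖ := by
  have hMf : 0 ≤ Mf := (abs_nonneg _).trans (hf 0)
  have hMg : 0 ≤ Mg := (abs_nonneg _).trans (hg 0)
  exact EuclideanSpace.norm_le_of_abs_le_add (by positivity) (by positivity) fun i =>
    abs_mul_sub_mul_le_of_lipschitzWith hf hg hfK hgK (a i) (a' i) (c i) (c' i)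

theorem norm_toEuclideanLin_le {m n : ℕ} (W : Matrix (Fin m) (Fin n) ℝ)
    (v : EuclideanSpace ℝ (Fin n)) : ‖Matrix.toEuclideanLin W v‖ ≤ matOpNorm W * ‖v‖ :=
  (LinearMap.toContinuousLinearMap (Matrix.toEuclideanLin W)).le_opNorm v

theorem matOpNorm_nonneg {m n : ℕ} (W : Matrix (Fin m) (Fin n) ℝ) : 0 ≤ matOpNorm W :=
  norm_nonneg _

theorem norm_affine_sub_le {m n p : ℕ} (W : Matrix (Fin m) (Fin p) ℝ)
    (U : Matrix (Fin m) (Fin n) ℝ) (b : EuclideanSpace ℝ (Fin m))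
    (x x' : EuclideanSpace ℝ (Fin p)) (h h' : EuclideanSpace ℝ (Fin n)) :
    ‖(Matrix.toEuclideanLin W x' + Matrix.toEuclideanLin U h' + b) -
        (Matrix.toEuclideanLin W x + Matrix.toEuclideanLin U h + b)‖ ≤
      matOpNorm W * ‖x' - x‖ + matOpNorm U * ‖h' - h‖ := by
  have hlin : (Matrix.toEuclideanLin W x' + Matrix.toEuclideanLin U h' + b) -
      (Matrix.toEuclideanLin W x + Matrix.toEuclideanLin U h + b) =
        Matrix.toEuclideanLin W (x' - x) + Matrix.toEuclideanLin U (h' - h) := by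
    rw [map_sub, map_sub]; abel
  rw [hlin]
  exact (norm_add_le _ _).trans
    (add_le_add (norm_toEuclideanLin_le W _) (norm_toEuclideanLin_le U _))

/-- Perturbation bound for the product of the input gate
`i(x,h) = σ∘(W_i·x + U_i·h + b_i)` and the cell input
`ci(x,h) = tanh∘(W_c·x + U_c·h + b_c)`:
`‖i(x̂,ĥ) ⊙ ci(x̂,ĥ) − i(x,h) ⊙ ci(x,h)‖
  ≤ (17/16)·((‖W_i‖ + ‖W_c‖)·‖x̂ − x‖ + (‖U_i‖ + ‖U_c‖)·‖ĥ − h‖)`. -/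
theorem input_gate_cell_input_perturbation_le
    (m n p : ℕ)
    (Wi Wc : Matrix (Fin m) (Fin p) ℝ) (Ui Uc : Matrix (Fin m) (Fin n) ℝ)
    (bi bc : EuclideanSpace ℝ (Fin m))
    (x xhat : EuclideanSpace ℝ (Fin p)) (h hhat : EuclideanSpace ℝ (Fin n))
    (igate : EuclideanSpace ℝ (Fin p) → EuclideanSpace ℝ (Fin n) → EuclideanSpace ℝ (Fin m))
    (ci : EuclideanSpace ℝ (Fin p) → EuclideanSpace ℝ (Fin n) → EuclideanSpace ℝ (Fin m))
    (higate : ∀ x' h', igate x' h' =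
      cwise sigmoid (Matrix.toEuclideanLin Wi x' + Matrix.toEuclideanLin Ui h' + bi))
    (hci : ∀ x' h', ci x' h' =
      cwise Real.tanh (Matrix.toEuclideanLin Wc x' + Matrix.toEuclideanLin Uc h' + bc)) :
    ‖hadam (igate xhat hhat) (ci xhat hhat) - hadam (igate x h) (ci x h)‖ ≤
      (17 / 16) * ((matOpNorm Wi + matOpNorm Wc) * ‖xhat - x‖ +
        (matOpNorm Ui + matOpNorm Uc) * ‖hhat - h‖) := by
  rw [higate, higate, hci, hci, sigmoid_eq_real_sigmoid]
  refine (norm_hadam_cwise_sub_le Real.abs_sigmoid_le_one (fun t => (Real.abs_tanh_lt_one t).le)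
    Real.lipschitzWith_sigmoid Real.lipschitzWith_tanh _ _ _ _).trans ?_
  have hi := norm_affine_sub_le Wi Ui bi x xhat h hhat
  have hc := norm_affine_sub_le Wc Uc bc x xhat h hhat
  have hWix := mul_nonneg (matOpNorm_nonneg Wi) (norm_nonneg (xhat - x))
  have hWcx := mul_nonneg (matOpNorm_nonneg Wc) (norm_nonneg (xhat - x))
  have hUih := mul_nonneg (matOpNorm_nonneg Ui) (norm_nonneg (hhat - h))
  have hUch := mul_nonneg (matOpNorm_nonneg Uc) (norm_nonneg (hhat - h))
  push_cast
  linarith
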